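/- Let B = b::B' be bids sorted descending by competitiveness and A = a::A' be asks sorted ascending by competitiveness (a is the least competitive ask), with p_b ≥ p_a. If M' is a matching between B and A with Q(b, M') ≥ q where q = min(q_b, q_a), then there exists a matching M'' between B and A with Q(M'') = Q(M') and Q(a ↔ b, M'') = q. -/

import Mathlib

structure Bid where
  id : ℕ
  timestamp : ℕ
  quantity : ℕ
  price : ℕ
deriving DecidableEq

structure Ask where
  id : ℕ
  timestamp : ℕ
  quantity : ℕ
  price : ℕ
deriving DecidableEq

structure Transaction where
  bid : Bid
  ask : Ask
  quantity : ℕ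
  price : ℕ
deriving DecidableEq

/-- Total traded quantity of a list of transactions. -/
def Qty (M : List Transaction) : ℕ := (M.map Transaction.quantity).sum

/-- Total traded quantity of bid `b` in `M`. -/
def QtyBid (b : Bid) (M : List Transaction) : ℕ :=
  ((M.filter (fun m => m.bid == b)).map Transaction.quantity).sum

/-- Total traded quantity of ask `a` in `M`. -/
def QtyAsk (a : Ask) (M : List Transaction) : ℕ :=
  ((M.filter (fun m => m.ask == a)).map Transaction.quantity).sum

/-- Total traded quantity between bid `b` and ask `a` in `M`. -/
def QtyBidAsk (b : Bid) (a : Ask) (M : List Transaction) : ℕ :=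
  ((M.filter (fun m => m.bid == b && m.ask == a)).map Transaction.quantity).sum

/-- Sum of quantities of a list of bids. -/
def QB (B : List Bid) : ℕ := (B.map Bid.quantity).sum

/-- Sum of quantities of a list of asks. -/
def QA (A : List Ask) : ℕ := (A.map Ask.quantity).sum

/-- `M` is a matching between bids `B` and asks `A`. -/
def Matching (B : List Bid) (A : List Ask) (M : List Transaction) : Prop :=
  (∀ m ∈ M, m.ask.price ≤ m.bid.price) ∧
  (∀ m ∈ M, m.bid ∈ B) ∧
  (∀ m ∈ M, m.ask ∈ A) ∧
  (∀ b ∈ B, QtyBid b M ≤ b.quantity) ∧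
  (∀ a ∈ A, QtyAsk a M ≤ a.quantity)

/-- Individual rationality. -/
def IsIR (M : List Transaction) : Prop :=
  ∀ m ∈ M, m.ask.price ≤ m.price ∧ m.price ≤ m.bid.price

/-- Uniformity: all trade prices equal. -/
def IsUniform (M : List Transaction) : Prop :=
  ∀ m1 ∈ M, ∀ m2 ∈ M, m1.price = m2.price

/-- `b1` is more competitive than `b2`. -/
def MoreCompetitiveBid (b1 b2 : Bid) : Prop :=
  b2.price < b1.price ∨ (b1.price = b2.price ∧ b1.timestamp < b2.timestamp)

/-- `a1` is more competitive than `a2`. -/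
def MoreCompetitiveAsk (a1 a2 : Ask) : Prop :=
  a1.price < a2.price ∨ (a1.price = a2.price ∧ a1.timestamp < a2.timestamp)

def FairOnBids (B : List Bid) (M : List Transaction) : Prop :=
  ∀ b1 ∈ B, ∀ b2 ∈ B, MoreCompetitiveBid b1 b2 → 1 ≤ QtyBid b2 M →
    QtyBid b1 M = b1.quantity

def FairOnAsks (A : List Ask) (M : List Transaction) : Prop :=
  ∀ a1 ∈ A, ∀ a2 ∈ A, MoreCompetitiveAsk a1 a2 → 1 ≤ QtyAsk a2 M →
    QtyAsk a1 M = a1.quantity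

def IsFair (B : List Bid) (A : List Ask) (M : List Transaction) : Prop :=
  FairOnBids B M ∧ FairOnAsks A M

/-- "at least as competitive as" order on bids (for sorting, most competitive first). -/
def BidGE (b1 b2 : Bid) : Prop := ¬ MoreCompetitiveBid b2 b1

/-- "at least as competitive as" order on asks (for sorting, most competitive first). -/
def AskGE (a1 a2 : Ask) : Prop := ¬ MoreCompetitiveAsk a2 a1
/-!
If `b` trades less than `q = min q_b q_a` with `a` but at least `q` in total, `b` has a trade
`(b, a₁)` with `a₁ ≠ a`. Move one unit of it onto `(b, a)`. If `a` has no spare capacity, `a`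
also has a trade `(b₁, a)` with `b₁ ≠ b`; take one unit off it as well and add a unit trade
`(b₁, a₁)`, which is matchable because `p(a₁) ≤ p_a ≤ p(b₁)`. Either way the total volume and the
volume of `b` are unchanged, all capacities are respected, and `Q(a ↔ b)` grows by one; iterate
until it reaches `q`.
-/

def qtyWhere (p : Bid → Ask → Bool) (M : List Transaction) : ℕ :=
  ((M.filter fun m => p m.bid m.ask).map Transaction.quantity).sum

def Transaction.decr (m : Transaction) : Transaction := { m with quantity := m.quantity - 1 }

def removeUnit (m : Transaction) (M : List Transaction) : List Transaction :=
  m.decr :: M.erase m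

-- The trade price is irrelevant: `Matching` only constrains limit prices.
def unitTrade (b : Bid) (a : Ask) : Transaction := ⟨b, a, 1, 0⟩

def Matchable (B : List Bid) (A : List Ask) (b : Bid) (a : Ask) : Prop :=
  a.price ≤ b.price ∧ b ∈ B ∧ a ∈ A

section qtyWhere

variable (p : Bid → Ask → Bool)

theorem qty_eq_qtyWhere (M : List Transaction) : Qty M = qtyWhere (fun _ _ => true) M := by
  simp [Qty, qtyWhere]

theorem qtyBid_eq_qtyWhere (b : Bid) (M : List Transaction) :
    QtyBid b M = qtyWhere (fun b' _ => b' == b) M := rfl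

theorem qtyAsk_eq_qtyWhere (a : Ask) (M : List Transaction) :
    QtyAsk a M = qtyWhere (fun _ a' => a' == a) M := rfl

theorem qtyBidAsk_eq_qtyWhere (b : Bid) (a : Ask) (M : List Transaction) :
    QtyBidAsk b a M = qtyWhere (fun b' a' => b' == b && a' == a) M := rfl

theorem qtyWhere_cons (m : Transaction) (M : List Transaction) :
    qtyWhere p (m :: M) = (if p m.bid m.ask then m.quantity else 0) + qtyWhere p M := by
  by_cases h : p m.bid m.ask <;> simp [qtyWhere, h]

theorem qtyWhere_unitTrade_cons (b : Bid) (a : Ask) (M : List Transaction) :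
    qtyWhere p (unitTrade b a :: M) = (p b a).toNat + qtyWhere p M := by
  rw [qtyWhere_cons, unitTrade]
  cases p b a <;> rfl

theorem qtyWhere_perm {M N : List Transaction} (h : M.Perm N) : qtyWhere p M = qtyWhere p N :=
  ((h.filter _).map _).sum_eq

theorem qtyWhere_removeUnit {m : Transaction} {M : List Transaction} (hm : m ∈ M)
    (hq : 0 < m.quantity) :
    qtyWhere p (removeUnit m M) + (p m.bid m.ask).toNat = qtyWhere p M := by
  rw [qtyWhere_perm p (List.perm_cons_erase hm), removeUnit, qtyWhere_cons, qtyWhere_cons]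
  simp only [Transaction.decr]
  by_cases h : p m.bid m.ask
  · simp only [h, if_true, Bool.toNat_true]; omega
  · simp only [h, Bool.false_eq_true, if_false, Bool.toNat_false]; omega

theorem qtyWhere_mono {q : Bid → Ask → Bool} (h : ∀ b a, p b a → q b a) (M : List Transaction) :
    qtyWhere p M ≤ qtyWhere q M := by
  induction M with
  | nil => rfl
  | cons m M ih =>
    rw [qtyWhere_cons, qtyWhere_cons]
    by_cases hp : p m.bid m.ask
    · simp only [hp, h _ _ hp, if_true]; omega
    · simp only [hp, Bool.false_eq_true, if_false]; omega

theorem exists_mem_of_qtyWhere_lt {q : Bid → Ask → Bool} {M : List Transaction}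
    (h : qtyWhere p M < qtyWhere q M) :
    ∃ m ∈ M, q m.bid m.ask ∧ ¬ p m.bid m.ask ∧ 0 < m.quantity := by
  induction M with
  | nil => simp [qtyWhere] at h
  | cons m M ih =>
    by_cases hm : q m.bid m.ask ∧ ¬ p m.bid m.ask ∧ 0 < m.quantity
    · exact ⟨m, List.mem_cons_self .., hm⟩
    · rw [qtyWhere_cons, qtyWhere_cons] at h
      obtain ⟨m', hm'M, hm'⟩ := ih (by split_ifs at h <;> grind)
      exact ⟨m', List.mem_cons_of_mem _ hm'M, hm'⟩

end qtyWhere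

theorem forall_mem_removeUnit {P : Bid → Ask → Prop} {m : Transaction} {M : List Transaction}
    (hM : ∀ x ∈ M, P x.bid x.ask) (hm : m ∈ M) : ∀ x ∈ removeUnit m M, P x.bid x.ask := by
  intro x hx
  rcases List.mem_cons.mp hx with rfl | hx
  · exact hM m hm
  · exact hM x (List.mem_of_mem_erase hx)

theorem matching_iff {B : List Bid} {A : List Ask} {M : List Transaction} :
    Matching B A M ↔ (∀ m ∈ M, Matchable B A m.bid m.ask) ∧
      (∀ b ∈ B, QtyBid b M ≤ b.quantity) ∧ (∀ a ∈ A, QtyAsk a M ≤ a.quantity) := by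
  simp only [Matching, Matchable, imp_and, forall_and, and_assoc]

section transfer

variable {B : List Bid} {A : List Ask} {b : Bid} {a : Ask} {M : List Transaction}

theorem Matching.qtyBidAsk_le_min (hM : Matching B A M) (hb : b ∈ B) (ha : a ∈ A) :
    QtyBidAsk b a M ≤ min b.quantity a.quantity := by
  have hbq := hM.2.2.2.1 b hb
  have haq := hM.2.2.2.2 a ha
  rw [qtyBid_eq_qtyWhere] at hbq
  rw [qtyAsk_eq_qtyWhere] at haq
  rw [qtyBidAsk_eq_qtyWhere]
  exact le_min ((qtyWhere_mono _ (by simp_all) M).trans hbq)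
    ((qtyWhere_mono _ (by simp_all) M).trans haq)

theorem exists_transfer_of_ask_slack (hba : Matchable B A b a) (hM : Matching B A M)
    {m : Transaction} (hmM : m ∈ M) (hmb : m.bid = b) (hma : m.ask ≠ a) (hmq : 0 < m.quantity)
    (hslack : QtyAsk a M < a.quantity) :
    ∃ N, Matching B A N ∧ Qty N = Qty M ∧ QtyBid b N = QtyBid b M ∧
      QtyBidAsk b a N = QtyBidAsk b a M + 1 := by
  obtain ⟨hMm, hMb, hMa⟩ := matching_iff.mp hM
  set N := unitTrade b a :: removeUnit m M
  have hcount : ∀ p, qtyWhere p N + (p b m.ask).toNat = qtyWhere p M + (p b a).toNat := by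
    intro p
    rw [← qtyWhere_removeUnit p hmM hmq, qtyWhere_unitTrade_cons, hmb]
    omega
  refine ⟨N, matching_iff.mpr ⟨fun x hx => ?_, fun b₂ hb₂ => ?_, fun a₂ ha₂ => ?_⟩, ?_, ?_, ?_⟩
  · rcases List.mem_cons.mp hx with rfl | hx
    · exact hba
    · exact forall_mem_removeUnit hMm hmM x hx
  · have h := hcount (fun b' _ => b' == b₂)
    have hM₂ := hMb b₂ hb₂
    beta_reduce at h
    rw [qtyBid_eq_qtyWhere] at hM₂ ⊢
    omega
  · have h := hcount (fun _ a' => a' == a₂)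
    have hM₂ := hMa a₂ ha₂
    beta_reduce at h
    rw [qtyAsk_eq_qtyWhere] at hslack hM₂ ⊢
    rcases eq_or_ne a₂ a with rfl | ha
    · simp only [beq_false_of_ne hma, beq_self_eq_true, Bool.toNat_true, Bool.toNat_false] at h
      omega
    · simp only [beq_false_of_ne ha.symm, Bool.toNat_false] at h
      omega
  · have h := hcount (fun _ _ => true)
    rw [qty_eq_qtyWhere, qty_eq_qtyWhere]
    omega
  · have h := hcount (fun b' _ => b' == b)
    beta_reduce at h
    rw [qtyBid_eq_qtyWhere, qtyBid_eq_qtyWhere]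
    omega
  · have h := hcount (fun b' a' => b' == b && a' == a)
    beta_reduce at h
    simp only [beq_false_of_ne hma, beq_self_eq_true, Bool.and_true, Bool.and_false,
      Bool.toNat_true, Bool.toNat_false] at h
    rw [qtyBidAsk_eq_qtyWhere, qtyBidAsk_eq_qtyWhere]
    omega

theorem exists_transfer_of_ask_full (hA : ∀ a' ∈ A, a'.price ≤ a.price)
    (hba : Matchable B A b a) (hM : Matching B A M) {m₁ m₂ : Transaction}
    (hm₁M : m₁ ∈ M) (hm₁b : m₁.bid = b) (hm₁a : m₁.ask ≠ a) (hm₁q : 0 < m₁.quantity)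
    (hm₂M : m₂ ∈ M) (hm₂b : m₂.bid ≠ b) (hm₂a : m₂.ask = a) (hm₂q : 0 < m₂.quantity) :
    ∃ N, Matching B A N ∧ Qty N = Qty M ∧ QtyBid b N = QtyBid b M ∧
      QtyBidAsk b a N = QtyBidAsk b a M + 1 := by
  obtain ⟨hMm, hMb, hMa⟩ := matching_iff.mp hM
  have hm₂M' : m₂ ∈ removeUnit m₁ M :=
    List.mem_cons_of_mem _ ((List.mem_erase_of_ne (by rintro rfl; exact hm₂b hm₁b)).mpr hm₂M)
  set N := unitTrade b a :: unitTrade m₂.bid m₁.ask :: removeUnit m₂ (removeUnit m₁ M)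
  have hcount : ∀ p, qtyWhere p N + (p b m₁.ask).toNat + (p m₂.bid a).toNat =
      qtyWhere p M + (p b a).toNat + (p m₂.bid m₁.ask).toNat := by
    intro p
    rw [← qtyWhere_removeUnit p hm₁M hm₁q, ← qtyWhere_removeUnit p hm₂M' hm₂q,
      qtyWhere_unitTrade_cons, qtyWhere_unitTrade_cons, hm₁b, hm₂a]
    omega
  have hcross : Matchable B A m₂.bid m₁.ask := by
    obtain ⟨-, -, hm₁A⟩ := hMm m₁ hm₁M
    obtain ⟨hp₂, hb₂, -⟩ := hMm m₂ hm₂M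
    exact ⟨(hA _ hm₁A).trans (hm₂a ▸ hp₂), hb₂, hm₁A⟩
  refine ⟨N, matching_iff.mpr ⟨fun x hx => ?_, fun b₂ hb₂ => ?_, fun a₂ ha₂ => ?_⟩, ?_, ?_, ?_⟩
  · rcases List.mem_cons.mp hx with rfl | hx
    · exact hba
    rcases List.mem_cons.mp hx with rfl | hx
    · exact hcross
    · exact forall_mem_removeUnit (forall_mem_removeUnit hMm hm₁M) hm₂M' x hx
  · have h := hcount (fun b' _ => b' == b₂)
    have hM₂ := hMb b₂ hb₂
    beta_reduce at h
    rw [qtyBid_eq_qtyWhere] at hM₂ ⊢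
    omega
  · have h := hcount (fun _ a' => a' == a₂)
    have hM₂ := hMa a₂ ha₂
    beta_reduce at h
    rw [qtyAsk_eq_qtyWhere] at hM₂ ⊢
    omega
  · have h := hcount (fun _ _ => true)
    rw [qty_eq_qtyWhere, qty_eq_qtyWhere]
    omega
  · have h := hcount (fun b' _ => b' == b)
    beta_reduce at h
    rw [qtyBid_eq_qtyWhere, qtyBid_eq_qtyWhere]
    omega
  · have h := hcount (fun b' a' => b' == b && a' == a)
    beta_reduce at h
    simp only [beq_false_of_ne hm₁a, beq_false_of_ne hm₂b, beq_self_eq_true, Bool.and_true,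
      Bool.and_false, Bool.toNat_true, Bool.toNat_false] at h
    rw [qtyBidAsk_eq_qtyWhere, qtyBidAsk_eq_qtyWhere]
    omega

theorem exists_transfer (hA : ∀ a' ∈ A, a'.price ≤ a.price) (hba : Matchable B A b a)
    (hM : Matching B A M) (hbid : QtyBidAsk b a M < QtyBid b M)
    (hask : QtyBidAsk b a M < a.quantity) :
    ∃ N, Matching B A N ∧ Qty N = Qty M ∧ QtyBid b N = QtyBid b M ∧
      QtyBidAsk b a N = QtyBidAsk b a M + 1 := by
  rw [qtyBidAsk_eq_qtyWhere, qtyBid_eq_qtyWhere] at hbid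
  obtain ⟨m₁, hm₁M, hm₁b, hm₁ba, hm₁q⟩ := exists_mem_of_qtyWhere_lt _ hbid
  simp only [beq_iff_eq, Bool.and_eq_true, not_and] at hm₁b hm₁ba
  by_cases hslack : QtyAsk a M < a.quantity
  · exact exists_transfer_of_ask_slack hba hM hm₁M hm₁b (hm₁ba hm₁b) hm₁q hslack
  · have hask' :
        qtyWhere (fun b' a' => b' == b && a' == a) M < qtyWhere (fun _ a' => a' == a) M := by
      rw [← qtyBidAsk_eq_qtyWhere, ← qtyAsk_eq_qtyWhere]
      omega
    obtain ⟨m₂, hm₂M, hm₂a, hm₂ba, hm₂q⟩ := exists_mem_of_qtyWhere_lt _ hask'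
    simp only [beq_iff_eq, Bool.and_eq_true, not_and'] at hm₂a hm₂ba
    exact exists_transfer_of_ask_full hA hba hM hm₁M hm₁b (hm₁ba hm₁b) hm₁q hm₂M (hm₂ba hm₂a)
      hm₂a hm₂q

theorem exists_matching_qtyBidAsk_eq_min (hA : ∀ a' ∈ A, a'.price ≤ a.price)
    (hba : Matchable B A b a) (hM : Matching B A M)
    (hq : min b.quantity a.quantity ≤ QtyBid b M) :
    ∃ N, Matching B A N ∧ Qty N = Qty M ∧ QtyBidAsk b a N = min b.quantity a.quantity := by
  obtain ⟨k, hk⟩ : ∃ k, min b.quantity a.quantity - QtyBidAsk b a M = k := ⟨_, rfl⟩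
  induction k generalizing M with
  | zero =>
    have := hM.qtyBidAsk_le_min hba.2.1 hba.2.2
    exact ⟨M, hM, rfl, by omega⟩
  | succ k ih =>
    obtain ⟨N, hN, hNQ, hNb, hNba⟩ := exists_transfer hA hba hM (by omega) (by omega)
    obtain ⟨N', hN', hN'Q, hN'ba⟩ := ih hN (hNb ▸ hq) (by omega)
    exact ⟨N', hN', hN'Q.trans hNQ, hN'ba⟩

end transfer

theorem statement_19_general (b : Bid) (B' : List Bid) (a : Ask) (A' : List Ask)
    (M' : List Transaction)
    (hsA : List.Pairwise (fun a1 a2 => ¬ MoreCompetitiveAsk a1 a2) (a :: A'))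
    (hp : a.price ≤ b.price)
    (hM : Matching (b :: B') (a :: A') M')
    (hq : min b.quantity a.quantity ≤ QtyBid b M') :
    ∃ M'', Matching (b :: B') (a :: A') M'' ∧ Qty M'' = Qty M' ∧
      QtyBidAsk b a M'' = min b.quantity a.quantity := by
  have hA : ∀ a' ∈ a :: A', a'.price ≤ a.price := by
    intro a' ha'
    rcases List.mem_cons.mp ha' with rfl | ha'
    · exact le_rfl
    · have := (List.pairwise_cons.mp hsA).1 a' ha'
      simp only [MoreCompetitiveAsk, not_or] at this
      omega
  exact exists_matching_qtyBidAsk_eq_min hA ⟨hp, List.mem_cons_self .., List.mem_cons_self ..⟩ hM hq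

theorem statement_19 (b : Bid) (B' : List Bid) (a : Ask) (A' : List Ask)
    (M' : List Transaction)
    (hsB : List.Pairwise BidGE (b :: B'))
    (hsA : List.Pairwise (fun a1 a2 => ¬ MoreCompetitiveAsk a1 a2) (a :: A'))
    (hp : a.price ≤ b.price)
    (hM : Matching (b :: B') (a :: A') M')
    (hq : min b.quantity a.quantity ≤ QtyBid b M') :
    ∃ M'', Matching (b :: B') (a :: A') M'' ∧ Qty M'' = Qty M' ∧
      QtyBidAsk b a M'' = min b.quantity a.quantity :=
  statement_19_general b B' a A' M' hsA hp hM hq
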